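/- Geometric convergence rate of the fixed-temperature Gibbs sampler: fix β ≥ 0 and let Q := (P_β)^N be the N-step random-scan Gibbs kernel. Then for every probability distribution μ₀ on 𝓑 and every l ≥ 0, d_V(μ₀ Q^l, π_β) ≤ d_V(μ₀, π_β) · ( 1 − ( exp(−β Δ) / (N · C(M,K)) )^N )^l, where d_V(μ,ν) := (1/2) Σ_{B∈𝓑} |μ(B) − ν(B)| is the total variation distance and C(M,K) is the binomial coefficient 'M choose K'. -/

import Mathlib

open Finset Filter

noncomputable section

/-- The configuration space: M×N 0-1 matrices (Bool-valued) whose every column sums to K. -/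
def Config (M N K : ℕ) : Finset (Fin M → Fin N → Bool) :=
  Finset.univ.filter fun B =>
    ∀ j : Fin N, (Finset.univ.filter fun i : Fin M => B i j = true).card = K

/-- Σ_{j∈s} B(i,j), the number of base stations in `s` caching content `i`. -/
def colCount {M N : ℕ} (B : Fin M → Fin N → Bool) (i : Fin M) (s : Finset (Fin N)) : ℕ :=
  (s.filter fun j => B i j = true).card

/-- The cache hit rate h(B) = Σ_s w(s) Σ_i λ_i 1{Σ_{j∈s} B(i,j) ≥ 1}. -/
def hitRate {M N : ℕ} (lam : Fin M → ℝ) (w : Finset (Fin N) → ℝ)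
    (B : Fin M → Fin N → Bool) : ℝ :=
  ∑ s : Finset (Fin N), w s * ∑ i : Fin M, lam i * (if 1 ≤ colCount B i s then (1 : ℝ) else 0)

/-- Columns v ∈ {0,1}^M with Σ_i v_i = K. -/
def colSet (M K : ℕ) : Finset (Fin M → Bool) :=
  Finset.univ.filter fun v => (Finset.univ.filter fun i : Fin M => v i = true).card = K

/-- x[j←v] : x with its j-th column replaced by v. -/
def updCol {M N : ℕ} (x : Fin M → Fin N → Bool) (j : Fin N) (v : Fin M → Bool) :
    Fin M → Fin N → Bool :=
  fun i j' => if j' = j then v i else x i j'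

/-- The Gibbs distribution π_β(B) = exp(β h(B)) / Σ_{B'∈𝓑} exp(β h(B')). -/
def gibbs (M N K : ℕ) (lam : Fin M → ℝ) (w : Finset (Fin N) → ℝ) (β : ℝ)
    (B : Fin M → Fin N → Bool) : ℝ :=
  Real.exp (β * hitRate lam w B) / ∑ B' ∈ Config M N K, Real.exp (β * hitRate lam w B')

/-- The random-scan Gibbs sampling kernel P_β(x,y). -/
def kernel (M N K : ℕ) (lam : Fin M → ℝ) (w : Finset (Fin N) → ℝ) (β : ℝ)
    (x y : Fin M → Fin N → Bool) : ℝ :=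
  (1 / (N : ℝ)) * ∑ j : Fin N,
    if ∀ (i : Fin M) (j' : Fin N), j' ≠ j → x i j' = y i j' then
      Real.exp (β * hitRate lam w y) /
        ∑ v ∈ colSet M K, Real.exp (β * hitRate lam w (updCol x j v))
    else 0

/-- The random-scan Gibbs kernel as a matrix indexed by the configuration space. -/
def kernelM (M N K : ℕ) (lam : Fin M → ℝ) (w : Finset (Fin N) → ℝ) (β : ℝ) :
    Matrix ↥(Config M N K) ↥(Config M N K) ℝ :=
  Matrix.of fun x y => kernel M N K lam w β x.1 y.1

/-- max_{B∈𝓑} h(B). -/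
def maxHit (M N K : ℕ) (lam : Fin M → ℝ) (w : Finset (Fin N) → ℝ) : ℝ :=
  sSup (hitRate lam w '' ↑(Config M N K))

/-- min_{B∈𝓑} h(B). -/
def minHit (M N K : ℕ) (lam : Fin M → ℝ) (w : Finset (Fin N) → ℝ) : ℝ :=
  sInf (hitRate lam w '' ↑(Config M N K))

/-- Δ = max_{B∈𝓑} h(B) − min_{B∈𝓑} h(B). -/
def Delta (M N K : ℕ) (lam : Fin M → ℝ) (w : Finset (Fin N) → ℝ) : ℝ :=
  maxHit M N K lam w - minHit M N K lam w

/-- Total variation distance d_V(μ,ν) = (1/2) Σ_B |μ(B) − ν(B)|. -/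
def dV {S : Type*} [Fintype S] (μ ν : S → ℝ) : ℝ :=
  (1 / 2) * ∑ B : S, |μ B - ν B|

/-!
The `N`-step kernel `Q = P_β ^ N` is bounded below entrywise by `ε = (e^{-βΔ} / (N C(M,K)))^N`:
any `y` is reached from `x` by overwriting the columns of `x` with those of `y` one at a time,
and each such step has probability at least `e^{-βΔ} / (N C(M,K))`, because the
normaliser of a single-column update is a sum of `C(M,K)` terms, each at most `e^{β max h}`.
Detailed balance makes `π_β` stationary for `Q`, and Doeblin's argument then contracts the total
variation distance to `π_β` by the factor `1 - ε` at every application of `Q`.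
-/

open Matrix

section Doeblin

variable {S : Type*} [Fintype S]

lemma sum_abs_vecMul_le {R : Matrix S S ℝ} (hR : ∀ x y, 0 ≤ R x y) {r : ℝ}
    (hr : ∀ x, ∑ y, R x y = r) (d : S → ℝ) :
    ∑ y, |(d ᵥ* R) y| ≤ r * ∑ x, |d x| := by
  calc ∑ y, |(d ᵥ* R) y| ≤ ∑ y, ∑ x, |d x| * R x y := by
        refine sum_le_sum fun y _ => (abs_sum_le_sum_abs _ _).trans_eq ?_
        simp only [abs_mul, abs_of_nonneg (hR _ y)]
    _ = r * ∑ x, |d x| := by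
        rw [sum_comm, mul_sum]
        exact sum_congr rfl fun x _ => by rw [← mul_sum, hr, mul_comm]

variable [DecidableEq S]

lemma sum_vecMul_of_mem_rowStochastic {Q : Matrix S S ℝ} (hQ : Q ∈ rowStochastic ℝ S)
    (μ : S → ℝ) : ∑ y, (μ ᵥ* Q) y = ∑ x, μ x := by
  rw [← dotProduct_one, ← dotProduct_mulVec, one_vecMul_of_mem_rowStochastic hQ, dotProduct_one]

lemma vecMul_pow_eq_self {Q : Matrix S S ℝ} {π : S → ℝ} (hπ : π ᵥ* Q = π) (n : ℕ) :
    π ᵥ* Q ^ n = π := by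
  induction n with
  | zero => rw [pow_zero, vecMul_one]
  | succ n ih => rw [pow_succ, ← vecMul_vecMul, ih, hπ]

theorem dV_vecMul_le_of_le_apply {Q : Matrix S S ℝ} (hQ : Q ∈ rowStochastic ℝ S) {ε : ℝ}
    (hε : 0 ≤ ε) (hQε : ∀ x y, ε ≤ Q x y) {μ ν : S → ℝ} (hμν : ∑ x, μ x = ∑ x, ν x) :
    dV (μ ᵥ* Q) (ν ᵥ* Q) ≤ (1 - ε) * dV μ ν := by
  -- `μ - ν` has mass zero, so `Q` may be replaced by `Q - ε`, which is still nonnegative.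
  set J : Matrix S S ℝ := of fun _ _ => ε
  set R := Q - J
  have hd : ∑ x, (μ - ν) x = 0 := by simp [sum_sub_distrib, hμν]
  have hdR : (μ - ν) ᵥ* R = (μ - ν) ᵥ* Q := by
    have hJ : (μ - ν) ᵥ* J = 0 := by
      ext y
      simp only [J, vecMul, dotProduct, of_apply, ← sum_mul, hd, zero_mul, Pi.zero_apply]
    rw [vecMul_sub, hJ, sub_zero]
  have hrow : ∀ x, ∑ y, R x y = 1 - Fintype.card S * ε := fun x => by
    simp [R, J, sum_sub_distrib, sum_row_of_mem_rowStochastic hQ x]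
  have hcard : (1 - Fintype.card S * ε) * ∑ x, |(μ - ν) x| ≤ (1 - ε) * ∑ x, |(μ - ν) x| := by
    rcases isEmpty_or_nonempty S with _ | _
    · simp
    · have : (1 : ℝ) ≤ Fintype.card S := by exact_mod_cast Fintype.card_pos
      gcongr
      nlinarith
  have key :=
    (sum_abs_vecMul_le (R := R) (fun x y => sub_nonneg.2 (hQε x y)) hrow (μ - ν)).trans hcard
  rw [hdR, sub_vecMul] at key
  simp only [dV, Pi.sub_apply] at key ⊢
  linarith

theorem dV_vecMul_pow_le {Q : Matrix S S ℝ} (hQ : Q ∈ rowStochastic ℝ S) {ε : ℝ}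
    (hε : 0 ≤ ε) (hQε : ∀ x y, ε ≤ Q x y) {π μ : S → ℝ} (hπ : π ᵥ* Q = π)
    (hμπ : ∑ x, μ x = ∑ x, π x) (l : ℕ) :
    dV (μ ᵥ* Q ^ l) π ≤ dV μ π * (1 - ε) ^ l := by
  rcases isEmpty_or_nonempty S with _ | ⟨⟨x⟩⟩
  · simp [dV]
  have hε1 : 0 ≤ 1 - ε := sub_nonneg.2 ((hQε x x).trans (le_one_of_mem_rowStochastic hQ))
  induction l with
  | zero => simp
  | succ l ih =>
    have hmass : ∑ x, (μ ᵥ* Q ^ l) x = ∑ x, π x := by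
      rw [sum_vecMul_of_mem_rowStochastic (pow_mem hQ l), hμπ]
    calc dV (μ ᵥ* Q ^ (l + 1)) π = dV (μ ᵥ* Q ^ l ᵥ* Q) (π ᵥ* Q) := by
          rw [hπ, vecMul_vecMul, pow_succ]
      _ ≤ (1 - ε) * dV (μ ᵥ* Q ^ l) π := dV_vecMul_le_of_le_apply hQ hε hQε hmass
      _ ≤ (1 - ε) * (dV μ π * (1 - ε) ^ l) := by gcongr
      _ = dV μ π * (1 - ε) ^ (l + 1) := by ring

lemma pow_apply_ge_of_chain {A : Matrix S S ℝ} (hA : ∀ x y, 0 ≤ A x y) {δ : ℝ} (hδ : 0 ≤ δ)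
    (z : ℕ → S) {n : ℕ} (hz : ∀ k < n, δ ≤ A (z k) (z (k + 1))) :
    δ ^ n ≤ (A ^ n) (z 0) (z n) := by
  induction n with
  | zero => simp
  | succ n ih =>
    calc δ ^ (n + 1) = δ ^ n * δ := pow_succ δ n
      _ ≤ (A ^ n) (z 0) (z n) * A (z n) (z (n + 1)) :=
          mul_le_mul (ih fun k hk => hz k (by omega)) (hz n (by omega)) hδ
            (pow_apply_nonneg hA n _ _)
      _ ≤ (A ^ (n + 1)) (z 0) (z (n + 1)) := by
          rw [pow_succ, mul_apply]
          exact single_le_sum (f := fun c => (A ^ n) (z 0) c * A c (z (n + 1)))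
            (fun c _ => mul_nonneg (pow_apply_nonneg hA n _ _) (hA _ _)) (mem_univ (z n))

end Doeblin

section GibbsSampler

variable {M N K : ℕ} {lam : Fin M → ℝ} {w : Finset (Fin N) → ℝ} {β : ℝ}

lemma mem_colSet {v : Fin M → Bool} : v ∈ colSet M K ↔ #{i | v i = true} = K := by
  simp [colSet]

lemma mem_Config {B : Fin M → Fin N → Bool} :
    B ∈ Config M N K ↔ ∀ j, (fun i => B i j) ∈ colSet M K := by
  simp [Config, colSet]

lemma card_colSet : #(colSet M K) = M.choose K := by
  conv_rhs => rw [← Fintype.card_fin M, ← card_univ, ← card_powersetCard]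
  refine card_nbij' (fun v => ({i | v i = true} : Finset (Fin M))) (fun t i => decide (i ∈ t))
    ?_ ?_ ?_ ?_
  · intro v hv
    simpa [mem_powersetCard] using mem_colSet.1 hv
  · intro t ht
    simpa [mem_colSet] using (mem_powersetCard.1 ht).2
  · intro v _
    funext i
    simp
  · intro t _
    ext i
    simp

section UpdCol

variable {x : Fin M → Fin N → Bool} {j : Fin N}

@[simp]
lemma updCol_apply_self (v : Fin M → Bool) (i : Fin M) : updCol x j v i j = v i := by
  simp [updCol]

lemma updCol_injective : Function.Injective (updCol x j) := fun v v' h =>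
  funext fun i => by simpa using congrFun (congrFun h i) j

lemma updCol_mem_Config (hx : x ∈ Config M N K) {v : Fin M → Bool} (hv : v ∈ colSet M K) :
    updCol x j v ∈ Config M N K := by
  refine mem_Config.2 fun j' => ?_
  by_cases h : j' = j
  · subst h
    simpa using hv
  · simpa [updCol, h] using mem_Config.1 hx j'

lemma filter_agree_eq_image (hx : x ∈ Config M N K) :
    {y ∈ Config M N K | ∀ i j', j' ≠ j → x i j' = y i j'} = (colSet M K).image (updCol x j) := by
  ext y
  simp only [mem_filter, mem_image]
  constructor
  · rintro ⟨hy, hxy⟩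
    refine ⟨fun i => y i j, mem_Config.1 hy j, funext fun i => funext fun j' => ?_⟩
    by_cases h : j' = j
    · simp [h]
    · simp [updCol, h, hxy i j' h]
  · rintro ⟨v, hv, rfl⟩
    exact ⟨updCol_mem_Config hx hv, fun i j' h => by simp [updCol, h]⟩

end UpdCol

def condPartition (K : ℕ) (lam : Fin M → ℝ) (w : Finset (Fin N) → ℝ) (β : ℝ)
    (x : Fin M → Fin N → Bool) (j : Fin N) : ℝ :=
  ∑ v ∈ colSet M K, Real.exp (β * hitRate lam w (updCol x j v))

lemma kernel_eq (x y : Fin M → Fin N → Bool) :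
    kernel M N K lam w β x y = (1 / (N : ℝ)) * ∑ j : Fin N,
      if ∀ i j', j' ≠ j → x i j' = y i j' then
        Real.exp (β * hitRate lam w y) / condPartition K lam w β x j
      else 0 :=
  rfl

lemma condPartition_pos {x : Fin M → Fin N → Bool} (hx : x ∈ Config M N K) (j : Fin N) :
    0 < condPartition K lam w β x j :=
  sum_pos (fun _ _ => Real.exp_pos _) ⟨_, mem_Config.1 hx j⟩

lemma condPartition_eq_of_agree {x y : Fin M → Fin N → Bool} {j : Fin N}
    (hxy : ∀ i j', j' ≠ j → x i j' = y i j') :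
    condPartition K lam w β x j = condPartition K lam w β y j := by
  have : updCol x j = updCol y j := by
    funext v i j'
    by_cases h : j' = j
    · simp [h]
    · simp [updCol, h, hxy i j' h]
  simp only [condPartition, this]

lemma le_maxHit {B : Fin M → Fin N → Bool} (hB : B ∈ Config M N K) :
    hitRate lam w B ≤ maxHit M N K lam w :=
  le_csSup ((Config M N K).finite_toSet.image _).bddAbove ⟨B, hB, rfl⟩

lemma minHit_le {B : Fin M → Fin N → Bool} (hB : B ∈ Config M N K) :
    minHit M N K lam w ≤ hitRate lam w B :=
  csInf_le ((Config M N K).finite_toSet.image _).bddBelow ⟨B, hB, rfl⟩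

lemma condPartition_le (hβ : 0 ≤ β) {x : Fin M → Fin N → Bool} (hx : x ∈ Config M N K)
    (j : Fin N) :
    condPartition K lam w β x j ≤ M.choose K * Real.exp (β * maxHit M N K lam w) := by
  rw [← card_colSet, ← nsmul_eq_mul]
  refine sum_le_card_nsmul _ _ _ fun v hv => ?_
  gcongr
  exact le_maxHit (updCol_mem_Config hx hv)

lemma kernel_nonneg (x y : Fin M → Fin N → Bool) : 0 ≤ kernel M N K lam w β x y := by
  unfold kernel
  positivity

lemma sum_kernel_eq_one (hN : 0 < N) {x : Fin M → Fin N → Bool} (hx : x ∈ Config M N K) :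
    ∑ y ∈ Config M N K, kernel M N K lam w β x y = 1 := by
  have hcol : ∀ j, ∑ y ∈ Config M N K, (if ∀ i j', j' ≠ j → x i j' = y i j' then
      Real.exp (β * hitRate lam w y) / condPartition K lam w β x j else 0) = 1 := fun j => by
    rw [← sum_filter, filter_agree_eq_image hx, sum_image updCol_injective.injOn, ← sum_div]
    exact div_self (condPartition_pos hx j).ne'
  simp_rw [kernel_eq, ← mul_sum]
  rw [sum_comm]
  simp [hcol, hN.ne']

lemma exp_mul_kernel_comm (x y : Fin M → Fin N → Bool) :
    Real.exp (β * hitRate lam w x) * kernel M N K lam w β x y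
      = Real.exp (β * hitRate lam w y) * kernel M N K lam w β y x := by
  simp only [kernel_eq, mul_sum, mul_left_comm _ (1 / (N : ℝ))]
  refine sum_congr rfl fun j _ => ?_
  by_cases hxy : ∀ i j', j' ≠ j → x i j' = y i j'
  · have hyx : ∀ i j', j' ≠ j → y i j' = x i j' := fun i j' h => (hxy i j' h).symm
    rw [if_pos hxy, if_pos hyx, condPartition_eq_of_agree hxy]
    ring
  · have hyx : ¬ ∀ i j', j' ≠ j → y i j' = x i j' := fun h => hxy fun i j' hj => (h i j' hj).symm
    simp only [if_neg hxy, if_neg hyx, mul_zero]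

lemma gibbs_mul_kernel_comm (x y : Fin M → Fin N → Bool) :
    gibbs M N K lam w β x * kernel M N K lam w β x y
      = gibbs M N K lam w β y * kernel M N K lam w β y x := by
  simp only [gibbs, div_mul_eq_mul_div, exp_mul_kernel_comm x y]

lemma le_kernel_of_agree (hβ : 0 ≤ β) {x y : Fin M → Fin N → Bool} (hx : x ∈ Config M N K)
    (hy : y ∈ Config M N K) (j : Fin N) (hxy : ∀ i j', j' ≠ j → x i j' = y i j') :
    Real.exp (-β * Delta M N K lam w) / (N * M.choose K) ≤ kernel M N K lam w β x y := by
  have hterm : Real.exp (-β * Delta M N K lam w) / M.choose K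
      ≤ Real.exp (β * hitRate lam w y) / condPartition K lam w β x j :=
    calc Real.exp (-β * Delta M N K lam w) / M.choose K
        = Real.exp (β * minHit M N K lam w)
            / (M.choose K * Real.exp (β * maxHit M N K lam w)) := by
          rw [div_mul_eq_div_div_swap, ← Real.exp_sub, Delta]
          ring_nf
      _ ≤ Real.exp (β * hitRate lam w y) / condPartition K lam w β x j := by
          gcongr
          · exact condPartition_pos hx j
          · exact minHit_le hy
          · exact condPartition_le hβ hx j
  have hsum := single_le_sum (f := fun j : Fin N => if ∀ i j', j' ≠ j → x i j' = y i j' then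
      Real.exp (β * hitRate lam w y) / condPartition K lam w β x j else 0)
    (fun j _ => by
      split_ifs
      exacts [div_nonneg (Real.exp_pos _).le (condPartition_pos hx j).le, le_rfl])
    (mem_univ j)
  rw [if_pos hxy] at hsum
  calc Real.exp (-β * Delta M N K lam w) / (N * M.choose K)
      = (1 / N) * (Real.exp (-β * Delta M N K lam w) / M.choose K) := by ring
    _ ≤ kernel M N K lam w β x y := by
      rw [kernel_eq]
      gcongr
      exact hterm.trans hsum

end GibbsSampler

section KernelMatrix

variable {M N K : ℕ} {lam : Fin M → ℝ} {w : Finset (Fin N) → ℝ} {β : ℝ}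

def mixCols (x y : Fin M → Fin N → Bool) (k : ℕ) : Fin M → Fin N → Bool :=
  fun i j => if (j : ℕ) < k then y i j else x i j

lemma mixCols_mem_Config {x y : Fin M → Fin N → Bool} (hx : x ∈ Config M N K)
    (hy : y ∈ Config M N K) (k : ℕ) : mixCols x y k ∈ Config M N K := by
  refine mem_Config.2 fun j => ?_
  by_cases h : (j : ℕ) < k
  · simpa [mixCols, h] using mem_Config.1 hy j
  · simpa [mixCols, h] using mem_Config.1 hx j

lemma mixCols_agree (x y : Fin M → Fin N → Bool) {k : ℕ} (hk : k < N) :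
    ∀ i j, j ≠ ⟨k, hk⟩ → mixCols x y k i j = mixCols x y (k + 1) i j := by
  intro i j hj
  have : (j : ℕ) ≠ k := fun h => hj (Fin.ext h)
  simp only [mixCols]
  split_ifs <;> first | rfl | omega

lemma kernelM_mem_rowStochastic (hN : 0 < N) :
    kernelM M N K lam w β ∈ rowStochastic ℝ ↥(Config M N K) := by
  refine mem_rowStochastic_iff_sum.2 ⟨fun x y => kernel_nonneg _ _, fun x => ?_⟩
  exact (sum_coe_sort (Config M N K) (kernel M N K lam w β x.1)).trans (sum_kernel_eq_one hN x.2)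

lemma le_kernelM_pow_apply (hβ : 0 ≤ β) (x y : ↥(Config M N K)) :
    (Real.exp (-β * Delta M N K lam w) / (N * M.choose K)) ^ N
      ≤ (kernelM M N K lam w β ^ N) x y := by
  let z : ℕ → ↥(Config M N K) := fun k => ⟨mixCols x.1 y.1 k, mixCols_mem_Config x.2 y.2 k⟩
  have hchain := pow_apply_ge_of_chain (A := kernelM M N K lam w β)
    (fun a b => kernel_nonneg a.1 b.1) (by positivity) z
    fun k hk => le_kernel_of_agree hβ (z k).2 (z (k + 1)).2 ⟨k, hk⟩ (mixCols_agree x.1 y.1 hk)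
  have hz0 : z 0 = x := Subtype.ext <| by funext i j; simp [z, mixCols]
  have hzN : z N = y := Subtype.ext <| by funext i j; simp [z, mixCols]
  rwa [hz0, hzN] at hchain

lemma gibbs_vecMul_kernelM (hN : 0 < N) :
    (fun B : ↥(Config M N K) => gibbs M N K lam w β B.1) ᵥ* kernelM M N K lam w β
      = fun B => gibbs M N K lam w β B.1 := by
  funext y
  calc ∑ x : ↥(Config M N K), gibbs M N K lam w β x.1 * kernel M N K lam w β x.1 y.1
      = ∑ x ∈ Config M N K, gibbs M N K lam w β x * kernel M N K lam w β x y.1 :=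
        sum_coe_sort (Config M N K) fun x => gibbs M N K lam w β x * kernel M N K lam w β x y.1
    _ = ∑ x ∈ Config M N K, gibbs M N K lam w β y.1 * kernel M N K lam w β y.1 x :=
        sum_congr rfl fun x _ => gibbs_mul_kernel_comm x y.1
    _ = gibbs M N K lam w β y.1 := by rw [← mul_sum, sum_kernel_eq_one hN y.2, mul_one]

lemma sum_gibbs_eq_one (h : (Config M N K).Nonempty) :
    ∑ B : ↥(Config M N K), gibbs M N K lam w β B.1 = 1 := by
  rw [sum_coe_sort (Config M N K) (gibbs M N K lam w β)]
  simp only [gibbs, ← sum_div]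
  exact div_self (sum_pos (fun _ _ => Real.exp_pos _) h).ne'

end KernelMatrix

theorem gibbs_sampler_geometric_convergence_general (M N K : ℕ) (hN : 1 ≤ N)
    (lam : Fin M → ℝ)
    (w : Finset (Fin N) → ℝ)
    (β : ℝ) (hβ : 0 ≤ β)
    (μ₀ : ↥(Config M N K) → ℝ) (hμsum : ∑ B, μ₀ B = 1)
    (l : ℕ) :
    dV (Matrix.vecMul μ₀ ((kernelM M N K lam w β ^ N) ^ l))
        (fun B => gibbs M N K lam w β B.1) ≤
      dV μ₀ (fun B => gibbs M N K lam w β B.1) *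
        (1 - (Real.exp (-β * Delta M N K lam w) / ((N : ℝ) * (M.choose K : ℝ))) ^ N) ^ l := by
  have hConfig : (Config M N K).Nonempty := by
    obtain ⟨B, -, -⟩ := exists_ne_zero_of_sum_ne_zero (hμsum.trans_ne one_ne_zero)
    exact ⟨B.1, B.2⟩
  have hmass : ∑ B, μ₀ B = ∑ B : ↥(Config M N K), gibbs M N K lam w β B.1 := by
    rw [hμsum, sum_gibbs_eq_one hConfig]
  exact dV_vecMul_pow_le (pow_mem (kernelM_mem_rowStochastic hN) N) (by positivity)
    (le_kernelM_pow_apply hβ) (vecMul_pow_eq_self (gibbs_vecMul_kernelM hN) N) hmass l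

/-- geometric convergence of the fixed-temperature Gibbs sampler:
with Q = (P_β)^N, d_V(μ₀ Q^l, π_β) ≤ d_V(μ₀, π_β)·(1 − (exp(−βΔ)/(N·C(M,K)))^N)^l. -/
theorem gibbs_sampler_geometric_convergence (M N K : ℕ) (hM : 1 ≤ M) (hN : 1 ≤ N)
    (hK : 1 ≤ K) (hKM : K < M)
    (lam : Fin M → ℝ) (hlam : ∀ i, 0 ≤ lam i)
    (w : Finset (Fin N) → ℝ) (hw : ∀ s, 0 ≤ w s)
    (β : ℝ) (hβ : 0 ≤ β)
    (μ₀ : ↥(Config M N K) → ℝ) (hμ0 : ∀ B, 0 ≤ μ₀ B) (hμsum : ∑ B, μ₀ B = 1)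
    (l : ℕ) :
    dV (Matrix.vecMul μ₀ ((kernelM M N K lam w β ^ N) ^ l))
        (fun B => gibbs M N K lam w β B.1) ≤
      dV μ₀ (fun B => gibbs M N K lam w β B.1) *
        (1 - (Real.exp (-β * Delta M N K lam w) / ((N : ℝ) * (M.choose K : ℝ))) ^ N) ^ l :=
  gibbs_sampler_geometric_convergence_general M N K hN lam w β hβ μ₀ hμsum l
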